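/- Let p and d be natural numbers, let X ⊂ ℝ^d be compact, let e be an MPLang expression appropriate for input arity d, and let ε > 0. Then there exists a ReLU-MPNN N of type d → 1 such that |e(G)(χ)(v) − N(G)(χ)(v)| ≤ ε for every graph G ∈ 𝔾_p, every d-dimensional feature map χ on G with image contained in X, and every node v of G. -/

import Mathlib

open scoped BigOperators

/-- A finite graph: nodes `Fin n`, with a symmetric, irreflexive adjacency relation. -/
structure FinGraph where
  n : ℕ
  adj : Fin n → Fin n → Bool
  symm : ∀ u v, adj u v = adj v u
  irrefl : ∀ v, adj v v = false

namespace FinGraph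

/-- The set of neighbors of `v` in `G`. -/
def neighbors (G : FinGraph) (v : Fin G.n) : Finset (Fin G.n) :=
  Finset.univ.filter fun u => G.adj v u

/-- The degree of a node. -/
def degree (G : FinGraph) (v : Fin G.n) : ℕ := (G.neighbors v).card

/-- `G` has degree at most `p` (i.e., `G ∈ 𝔾_p`). -/
def DegreeLE (G : FinGraph) (p : ℕ) : Prop := ∀ v, G.degree v ≤ p

end FinGraph

/-- The rectified linear unit. -/
noncomputable def ReLU (x : ℝ) : ℝ := max 0 x

/-- An MPNN layer of type `d → r`: matrices `W₁, W₂ ∈ ℝ^{r×d}`, bias `b ∈ ℝ^r`,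
and a continuous activation function `σ`. -/
structure Layer (d r : ℕ) where
  W₁ : Matrix (Fin r) (Fin d) ℝ
  W₂ : Matrix (Fin r) (Fin d) ℝ
  b : Fin r → ℝ
  σ : ℝ → ℝ
  hσ : Continuous σ

namespace Layer

/-- The GFMT defined by a layer:
`L(G)(χ)(v) = σ(W₁ χ(v) + W₂ Σ_{u ∈ N_G(v)} χ(u) + b)`, componentwise. -/
noncomputable def eval {d r : ℕ} (L : Layer d r) (G : FinGraph)
    (χ : Fin G.n → Fin d → ℝ) (v : Fin G.n) : Fin r → ℝ :=
  fun i => L.σ (L.W₁.mulVec (χ v) i + L.W₂.mulVec (∑ u ∈ G.neighbors v, χ u) i + L.b i)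

end Layer

/-- An MPNN: a nonempty sequence of layers with matching arities. -/
inductive MPNN : ℕ → ℕ → Type where
  | single {d r : ℕ} : Layer d r → MPNN d r
  | cons {d m r : ℕ} : Layer d m → MPNN m r → MPNN d r

namespace MPNN

/-- The GFMT defined by an MPNN: the sequential composition of its layers. -/
noncomputable def eval : {d r : ℕ} → MPNN d r → (G : FinGraph) →
    (Fin G.n → Fin d → ℝ) → (Fin G.n → Fin r → ℝ)
  | _, _, .single L, G, χ => L.eval G χ
  | _, _, .cons L N, G, χ => N.eval G (L.eval G χ)

/-- A ReLU-MPNN: every layer uses ReLU, except that the last layer may use the identity. -/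
def IsReLU : {d r : ℕ} → MPNN d r → Prop
  | _, _, .single L => L.σ = ReLU ∨ L.σ = id
  | _, _, .cons L N => L.σ = ReLU ∧ N.IsReLU

/-- The set of activation functions used in the layers of an MPNN. -/
def activations : {d r : ℕ} → MPNN d r → Set (ℝ → ℝ)
  | _, _, .single L => {L.σ}
  | _, _, .cons L N => insert L.σ N.activations

/-- The number of layers of an MPNN. -/
def numLayers : {d r : ℕ} → MPNN d r → ℕ
  | _, _, .single _ => 1
  | _, _, .cons _ N => N.numLayers + 1

end MPNN

/-- MPLang expressions: `e ::= 1 | P_i | a·e | e + e | f(e) | ◇e`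
with `f : ℝ → ℝ` continuous. -/
inductive MPLang : Type where
  | one : MPLang
  | proj : ℕ → MPLang
  | scale : ℝ → MPLang → MPLang
  | add : MPLang → MPLang → MPLang
  | app : (f : ℝ → ℝ) → Continuous f → MPLang → MPLang
  | diamond : MPLang → MPLang

namespace MPLang

/-- `e` is appropriate for input arity `d`: every `P_i` has `1 ≤ i ≤ d`. -/
def Appropriate (d : ℕ) : MPLang → Prop
  | .one => True
  | .proj i => 1 ≤ i ∧ i ≤ d
  | .scale _ e => e.Appropriate d
  | .add e₁ e₂ => e₁.Appropriate d ∧ e₂.Appropriate d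
  | .app _ _ e => e.Appropriate d
  | .diamond e => e.Appropriate d

/-- Semantics of MPLang expressions (the `P_i` are 1-based; out-of-range
projections, which cannot occur in expressions appropriate for `d`, yield 0). -/
noncomputable def eval (d : ℕ) : MPLang → (G : FinGraph) →
    (Fin G.n → Fin d → ℝ) → Fin G.n → ℝ
  | .one, _, _, _ => 1
  | .proj i, _, χ, v => if h : i - 1 < d then χ v ⟨i - 1, h⟩ else 0
  | .scale a e, G, χ, v => a * e.eval d G χ v
  | .add e₁ e₂, G, χ, v => e₁.eval d G χ v + e₂.eval d G χ v
  | .app f _ e, G, χ, v => f (e.eval d G χ v)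
  | .diamond e, G, χ, v => ∑ u ∈ G.neighbors v, e.eval d G χ u

/-- All function applications in the expression apply functions from `F`. -/
def AppsIn (F : Set (ℝ → ℝ)) : MPLang → Prop
  | .one => True
  | .proj _ => True
  | .scale _ e => e.AppsIn F
  | .add e₁ e₂ => e₁.AppsIn F ∧ e₂.AppsIn F
  | .app f _ e => f ∈ F ∧ e.AppsIn F
  | .diamond e => e.AppsIn F

/-- A ReLU-MPLang expression: all function applications apply ReLU. -/
def IsReLU (e : MPLang) : Prop := e.AppsIn {ReLU}

end MPLang

/-!
Induction on the expression, with the invariant that `e` is approximated to any accuracy by a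
linear readout `w ⬝ᵥ N(G)(χ)(v)` of an MPNN all of whose layers are ReLU layers. Scaling acts on
the readout alone; a sum runs the two networks side by side, after padding the shallower one with
ReLU identity layers, which do not change its non-negative outputs; `◇` passes the signed value
`z = w ⬝ᵥ N(G)(χ)(u)` as the pair `(ReLU z, ReLU (-z))` to a layer that sums over neighbours.
For `f(e)`, the values of `e` stay in a bounded interval, on which `f` is uniformly close to its
piecewise linear interpolation `Σ cᵢ ReLU (x - tᵢ)`; one more ReLU layer computes the
`ReLU (w ⬝ᵥ N(G)(χ)(v) - tᵢ)`. A last layer with identity activation computes the readout.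
-/

lemma relu_of_nonneg {x : ℝ} (h : 0 ≤ x) : ReLU x = x := max_eq_right h

lemma relu_of_nonpos {x : ℝ} (h : x ≤ 0) : ReLU x = 0 := max_eq_left h

lemma continuous_relu : Continuous ReLU := continuous_const.max continuous_id

lemma relu_sub_relu_neg (x : ℝ) : ReLU x - ReLU (-x) = x := by
  rcases le_total 0 x with h | h
  · rw [relu_of_nonneg h, relu_of_nonpos (neg_nonpos.mpr h), sub_zero]
  · rw [relu_of_nonpos h, relu_of_nonneg (neg_nonneg.mpr h), zero_sub, neg_neg]

section ReLUSum

open Set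

def IsReLUSum (g : ℝ → ℝ) : Prop :=
  ∃ (m : ℕ) (c t : Fin m → ℝ), ∀ x, g x = ∑ i, c i * ReLU (x - t i)

lemma IsReLUSum.add {g h : ℝ → ℝ} (hg : IsReLUSum g) (hh : IsReLUSum h) :
    IsReLUSum (g + h) := by
  obtain ⟨m, c, t, hg⟩ := hg
  obtain ⟨m', c', t', hh⟩ := hh
  refine ⟨m + m', Fin.append c c', Fin.append t t', fun x => ?_⟩
  simp [Fin.sum_univ_add, hg, hh]

noncomputable def ramp (s t x : ℝ) : ℝ := ReLU (x - s) - ReLU (x - t)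

lemma isReLUSum_smul_ramp (a s t : ℝ) : IsReLUSum fun x => a * ramp s t x :=
  ⟨2, ![a, -a], ![s, t], fun x => by simp [ramp, Fin.sum_univ_two]; ring⟩

lemma ramp_of_le {s t x : ℝ} (hxs : x ≤ s) (hst : s ≤ t) : ramp s t x = 0 := by
  rw [ramp, relu_of_nonpos (by linarith), relu_of_nonpos (by linarith), sub_zero]

lemma ramp_of_mem_Icc {s t x : ℝ} (hx : x ∈ Icc s t) : ramp s t x = x - s := by
  rw [ramp, relu_of_nonneg (by linarith [hx.1]), relu_of_nonpos (by linarith [hx.2]), sub_zero]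

lemma ramp_of_ge {s t x : ℝ} (hst : s ≤ t) (htx : t ≤ x) : ramp s t x = t - s := by
  rw [ramp, relu_of_nonneg (by linarith), relu_of_nonneg (by linarith)]
  ring

lemma abs_sub_add_mul_sub_le {y u v ε θ : ℝ} (hu : |y - u| ≤ ε) (hv : |y - v| ≤ ε)
    (hθ : θ ∈ Icc (0 : ℝ) 1) : |y - (u + θ * (v - u))| ≤ ε := by
  have := (convex_closedBall y ε).add_smul_sub_mem (x := u) (y := v)
    (by rwa [Metric.mem_closedBall, Real.dist_eq, abs_sub_comm])
    (by rwa [Metric.mem_closedBall, Real.dist_eq, abs_sub_comm]) hθ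
  rwa [Metric.mem_closedBall, Real.dist_eq, abs_sub_comm, smul_eq_mul] at this

/-- On `[t₁, t₂]`, `g'` is the linear interpolation of `f`: a convex combination of `f t₁` and
`f t₂`, both within `ε` of `f x`. -/
lemma approx_add_slope_mul_ramp {f g : ℝ → ℝ} {ε t₀ t₁ t₂ : ℝ}
    (hg : ∀ x ∈ Icc t₀ t₁, |f x - g x| ≤ ε) (hg_tail : ∀ x, t₁ ≤ x → g x = f t₁)
    (h₁₂ : t₁ ≤ t₂) (hosc : ∀ x ∈ Icc t₁ t₂, |f x - f t₁| ≤ ε ∧ |f x - f t₂| ≤ ε) :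
    let g' := fun x => g x + (f t₂ - f t₁) / (t₂ - t₁) * ramp t₁ t₂ x
    (∀ x ∈ Icc t₀ t₂, |f x - g' x| ≤ ε) ∧ ∀ x, t₂ ≤ x → g' x = f t₂ := by
  intro g'
  have hslope : (f t₂ - f t₁) / (t₂ - t₁) * (t₂ - t₁) = f t₂ - f t₁ :=
    div_mul_cancel_of_imp fun h => by rw [show t₂ = t₁ by linarith, sub_self]
  refine ⟨fun x hx => ?_, fun x hx => ?_⟩
  · rcases le_total x t₁ with hx₁ | hx₁
    · simpa [g', ramp_of_le hx₁ h₁₂] using hg x ⟨hx.1, hx₁⟩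
    · have hx' : x ∈ Icc t₁ t₂ := ⟨hx₁, hx.2⟩
      have hθ : (x - t₁) / (t₂ - t₁) ∈ Icc (0 : ℝ) 1 :=
        ⟨div_nonneg (by linarith) (by linarith),
          div_le_one_of_le₀ (by linarith [hx'.2]) (by linarith)⟩
      have := abs_sub_add_mul_sub_le (hosc x hx').1 (hosc x hx').2 hθ
      simp only [g', hg_tail x hx₁, ramp_of_mem_Icc hx']
      convert this using 3
      ring
  · simp only [g', hg_tail x (h₁₂.trans hx), ramp_of_ge h₁₂ hx, hslope]
    ring

lemma exists_isReLUSum_interpolation {f : ℝ → ℝ} {a b δ ε : ℝ} (hδ : 0 ≤ δ) (hε : 0 ≤ ε)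
    (hfδ : ∀ x ∈ Icc a b, ∀ y ∈ Icc a b, dist x y ≤ δ → dist (f x) (f y) ≤ ε) (k : ℕ) :
    ∀ c ∈ Icc a b, c ≤ a + k * δ → ∃ g, IsReLUSum g ∧
      (∀ x ∈ Icc a c, |f x - g x| ≤ ε) ∧ ∀ x, c ≤ x → g x = f c := by
  induction k with
  | zero =>
    intro c hc hca
    obtain rfl : c = a := le_antisymm (by simpa using hca) hc.1
    refine ⟨fun x => f c * ramp (c - 1) c x, isReLUSum_smul_ramp _ _ _, fun x hx => ?_,
      fun x hx => by simp [ramp_of_ge (by linarith : c - 1 ≤ c) hx]⟩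
    obtain rfl : x = c := le_antisymm hx.2 hx.1
    simp [ramp_of_ge (by linarith : x - 1 ≤ x) le_rfl, hε]
  | succ k ih =>
    intro c hc hck
    push_cast at hck
    set c' := max a (c - δ)
    have hc' : c' ∈ Icc a b := ⟨le_max_left _ _, max_le (hc.1.trans hc.2) (by linarith [hc.2])⟩
    have hc'c : c' ≤ c := max_le hc.1 (by linarith)
    obtain ⟨g, hg, happrox, htail⟩ :=
      ih c' hc' (max_le (le_add_of_nonneg_right (by positivity)) (by linarith))
    have hosc : ∀ x ∈ Icc c' c, |f x - f c'| ≤ ε ∧ |f x - f c| ≤ ε := by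
      intro x hx
      have hxab : x ∈ Icc a b := ⟨hc'.1.trans hx.1, hx.2.trans hc.2⟩
      have hxc' : dist x c' ≤ δ := by
        rw [Real.dist_eq, abs_of_nonneg (by linarith [hx.1])]
        linarith [le_max_right a (c - δ), hx.2]
      have hxc : dist x c ≤ δ := by
        rw [Real.dist_eq, abs_of_nonpos (by linarith [hx.2])]
        linarith [le_max_right a (c - δ), hx.1]
      exact ⟨by simpa [Real.dist_eq] using hfδ x hxab c' hc' hxc',
        by simpa [Real.dist_eq] using hfδ x hxab c hc hxc⟩
    obtain ⟨happrox', htail'⟩ := approx_add_slope_mul_ramp happrox htail hc'c hosc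
    exact ⟨_, hg.add (isReLUSum_smul_ramp _ _ _), happrox', htail'⟩

theorem ContinuousOn.exists_isReLUSum_approx {f : ℝ → ℝ} {a b : ℝ}
    (hf : ContinuousOn f (Icc a b)) {ε : ℝ} (hε : 0 < ε) :
    ∃ g, IsReLUSum g ∧ ∀ x ∈ Icc a b, |f x - g x| ≤ ε := by
  rcases lt_or_ge b a with hba | hab
  · exact ⟨0, ⟨0, 0, 0, by simp⟩, fun x hx => absurd (hx.1.trans hx.2) (not_le.mpr hba)⟩
  obtain ⟨δ, hδ, hfδ⟩ := Metric.uniformContinuousOn_iff_le.mp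
    (isCompact_Icc.uniformContinuousOn_of_continuous hf) ε hε
  obtain ⟨k, hk⟩ := exists_nat_ge ((b - a) / δ)
  rw [div_le_iff₀ hδ] at hk
  obtain ⟨g, hg, happrox, -⟩ :=
    exists_isReLUSum_interpolation hδ.le hε.le hfδ k b ⟨hab, le_rfl⟩ (by linarith)
  exact ⟨g, hg, happrox⟩

end ReLUSum

section Layers

open Matrix

variable {k d m m₁ m₂ r : ℕ}

namespace Layer

def comp (L : Layer m r) (A : Matrix (Fin m) (Fin k) ℝ) : Layer k r :=
  ⟨L.W₁ * A, L.W₂ * A, L.b, L.σ, L.hσ⟩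

lemma eval_comp (L : Layer m r) (A : Matrix (Fin m) (Fin k) ℝ) (G : FinGraph)
    (χ : Fin G.n → Fin k → ℝ) : (L.comp A).eval G χ = L.eval G fun u => A *ᵥ χ u := by
  funext v i
  simp [eval, comp, ← mulVec_mulVec, mulVec_sum]

noncomputable def stack (L₁ : Layer d m₁) (L₂ : Layer d m₂) : Layer d (m₁ + m₂) :=
  ⟨.of (Fin.append (fun i => L₁.W₁ i) (fun i => L₂.W₁ i)),
    .of (Fin.append (fun i => L₁.W₂ i) (fun i => L₂.W₂ i)),
    Fin.append L₁.b L₂.b, ReLU, continuous_relu⟩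

lemma eval_stack {L₁ : Layer d m₁} {L₂ : Layer d m₂} (h₁ : L₁.σ = ReLU) (h₂ : L₂.σ = ReLU)
    (G : FinGraph) (χ : Fin G.n → Fin d → ℝ) (v : Fin G.n) :
    (L₁.stack L₂).eval G χ v = Fin.append (L₁.eval G χ v) (L₂.eval G χ v) := by
  funext i
  induction i using Fin.addCases <;> simp [eval, stack, mulVec, h₁, h₂]

noncomputable def reluId (m : ℕ) : Layer m m := ⟨1, 0, 0, ReLU, continuous_relu⟩

lemma eval_reluId {G : FinGraph} {χ : Fin G.n → Fin m → ℝ} (hχ : ∀ v i, 0 ≤ χ v i) :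
    (reluId m).eval G χ = χ := by
  funext v i
  simp [eval, reluId, relu_of_nonneg (hχ v i)]

end Layer

lemma mulVec_submatrix_one_castAdd (x : Fin m₁ → ℝ) (y : Fin m₂ → ℝ) :
    ((1 : Matrix _ _ ℝ).submatrix (Fin.castAdd m₂) id) *ᵥ Fin.append x y = x := by
  funext i
  simp [mulVec, dotProduct, one_apply]

lemma mulVec_submatrix_one_natAdd (x : Fin m₁ → ℝ) (y : Fin m₂ → ℝ) :
    ((1 : Matrix _ _ ℝ).submatrix (Fin.natAdd m₁) id) *ᵥ Fin.append x y = y := by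
  funext i
  simp [mulVec, dotProduct, one_apply]

end Layers

namespace MPNN

open Matrix

def snoc : {d m : ℕ} → MPNN d m → {r : ℕ} → Layer m r → MPNN d r
  | _, _, .single L₀, _, L => .cons L₀ (.single L)
  | _, _, .cons L₀ N, _, L => .cons L₀ (N.snoc L)

variable {d m r : ℕ}

lemma eval_snoc (N : MPNN d m) (L : Layer m r) (G : FinGraph) (χ : Fin G.n → Fin d → ℝ) :
    (N.snoc L).eval G χ = L.eval G (N.eval G χ) := by
  induction N generalizing r with
  | single => rfl
  | cons L₀ N ih => exact ih L _

lemma numLayers_snoc (N : MPNN d m) (L : Layer m r) :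
    (N.snoc L).numLayers = N.numLayers + 1 := by
  induction N generalizing r with
  | single => rfl
  | cons L₀ N ih => exact congrArg (· + 1) (ih L)

lemma activations_snoc (N : MPNN d m) (L : Layer m r) :
    (N.snoc L).activations = insert L.σ N.activations := by
  induction N generalizing r with
  | single => exact Set.pair_comm _ _
  | cons L₀ N ih =>
    simp only [snoc, activations, ih L]
    exact Set.insert_comm _ _ _

lemma activations_snoc_subset {N : MPNN d m} {L : Layer m r} (hN : N.activations ⊆ {ReLU})
    (hL : L.σ = ReLU) : (N.snoc L).activations ⊆ {ReLU} := by
  rw [activations_snoc, Set.insert_subset_iff]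
  exact ⟨hL, hN⟩

lemma isReLU_snoc {N : MPNN d m} {L : Layer m r} (hN : N.activations ⊆ {ReLU})
    (hL : L.σ = ReLU ∨ L.σ = id) : (N.snoc L).IsReLU := by
  induction N generalizing r with
  | single L₀ => exact ⟨hN rfl, hL⟩
  | cons L₀ N ih =>
    rw [activations, Set.insert_subset_iff] at hN
    exact ⟨hN.1, ih hN.2 hL⟩

lemma one_le_numLayers (N : MPNN d r) : 1 ≤ N.numLayers := by
  cases N <;> simp [numLayers]

lemma eval_nonneg {N : MPNN d r} (hN : N.activations ⊆ {ReLU}) (G : FinGraph)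
    (χ : Fin G.n → Fin d → ℝ) (v : Fin G.n) (i : Fin r) : 0 ≤ N.eval G χ v i := by
  induction N with
  | single L =>
    show 0 ≤ L.σ _
    rw [show L.σ = ReLU from hN rfl]
    exact le_max_left _ _
  | cons L N ih => exact ih (fun _ h => hN (Set.mem_insert_of_mem _ h)) _ i

lemma exists_pad {N : MPNN d r} (hN : N.activations ⊆ {ReLU}) {k : ℕ} (hk : N.numLayers ≤ k) :
    ∃ N' : MPNN d r, N'.activations ⊆ {ReLU} ∧ N'.numLayers = k ∧ N'.eval = N.eval := by
  induction k, hk using Nat.le_induction with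
  | base => exact ⟨N, hN, rfl, rfl⟩
  | succ k _ ih =>
    obtain ⟨N', hN', hk, heval⟩ := ih
    refine ⟨N'.snoc (Layer.reluId r), activations_snoc_subset hN' rfl,
      by rw [numLayers_snoc, hk], ?_⟩
    funext G χ
    rw [eval_snoc, heval, Layer.eval_reluId (eval_nonneg hN G χ)]

/-- The input maps `A₁`, `A₂` let the recursion feed each network its own half of the stacked
hidden features. -/
lemma exists_zip : ∀ {d₁ r₁ d₂ r₂ k : ℕ} (N₁ : MPNN d₁ r₁) (N₂ : MPNN d₂ r₂)
    (A₁ : Matrix (Fin d₁) (Fin k) ℝ) (A₂ : Matrix (Fin d₂) (Fin k) ℝ),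
    N₁.activations ⊆ {ReLU} → N₂.activations ⊆ {ReLU} → N₁.numLayers = N₂.numLayers →
    ∃ N : MPNN k (r₁ + r₂), N.activations ⊆ {ReLU} ∧ ∀ G χ v,
      N.eval G χ v = Fin.append (N₁.eval G (fun u => A₁ *ᵥ χ u) v)
        (N₂.eval G (fun u => A₂ *ᵥ χ u) v)
  | _, _, _, _, _, .single L₁, .single L₂, A₁, A₂, h₁, h₂, _ =>
    ⟨.single ((L₁.comp A₁).stack (L₂.comp A₂)), by simp [activations, Layer.stack],
      fun G χ v => by
        rw [eval, Layer.eval_stack (L₁ := L₁.comp A₁) (L₂ := L₂.comp A₂) (h₁ rfl) (h₂ rfl),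
          Layer.eval_comp, Layer.eval_comp]; rfl⟩
  | _, _, _, _, _, .cons (m := m₁) L₁ M₁, .cons (m := m₂) L₂ M₂, A₁, A₂, h₁, h₂, hn => by
    rw [activations, Set.insert_subset_iff] at h₁ h₂
    obtain ⟨M, hM, heval⟩ := exists_zip M₁ M₂
      ((1 : Matrix (Fin (m₁ + m₂)) (Fin (m₁ + m₂)) ℝ).submatrix (Fin.castAdd m₂) id)
      ((1 : Matrix (Fin (m₁ + m₂)) (Fin (m₁ + m₂)) ℝ).submatrix (Fin.natAdd m₁) id)
      h₁.2 h₂.2 (by simpa [numLayers] using hn)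
    refine ⟨.cons ((L₁.comp A₁).stack (L₂.comp A₂)) M, ?_, fun G χ v => ?_⟩
    · simpa [activations, Layer.stack] using hM
    · have hstack := Layer.eval_stack (L₁ := L₁.comp A₁) (L₂ := L₂.comp A₂) h₁.1 h₂.1 G χ
      simp only [eval, heval, hstack, mulVec_submatrix_one_castAdd, mulVec_submatrix_one_natAdd,
        Layer.eval_comp]
  | _, _, _, _, _, .single _, .cons _ M₂, _, _, _, _, hn => by
    have := M₂.one_le_numLayers; simp [numLayers] at hn; omega
  | _, _, _, _, _, .cons _ M₁, .single _, _, _, _, _, hn => by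
    have := M₁.one_le_numLayers; simp [numLayers] at hn; omega

lemma exists_parallel {r₁ r₂ : ℕ} {N₁ : MPNN d r₁} {N₂ : MPNN d r₂}
    (h₁ : N₁.activations ⊆ {ReLU}) (h₂ : N₂.activations ⊆ {ReLU}) :
    ∃ N : MPNN d (r₁ + r₂), N.activations ⊆ {ReLU} ∧
      ∀ G χ v, N.eval G χ v = Fin.append (N₁.eval G χ v) (N₂.eval G χ v) := by
  obtain ⟨N₁', h₁', hn₁, heval₁⟩ := exists_pad h₁ (le_max_left N₁.numLayers N₂.numLayers)
  obtain ⟨N₂', h₂', hn₂, heval₂⟩ := exists_pad h₂ (le_max_right N₁.numLayers N₂.numLayers)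
  obtain ⟨N, hN, heval⟩ :=
    exists_zip N₁' N₂' (1 : Matrix (Fin d) (Fin d) ℝ) 1 h₁' h₂' (hn₁.trans hn₂.symm)
  exact ⟨N, hN, fun G χ v => by simp [heval, heval₁, heval₂]⟩

end MPNN

section Approximation

open Matrix

variable {d m : ℕ}

/-- A signed value `z` passes through a ReLU layer as the pair `(ReLU z, ReLU (-z))`. -/
noncomputable def pmLayer (w₁ w₂ : Fin m → ℝ) (c : ℝ) : Layer m 2 :=
  ⟨.of ![w₁, -w₁], .of ![w₂, -w₂], ![c, -c], ReLU, continuous_relu⟩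

lemma dotProduct_eval_pmLayer (w₁ w₂ : Fin m → ℝ) (c : ℝ) (G : FinGraph)
    (χ : Fin G.n → Fin m → ℝ) (v : Fin G.n) :
    ![1, -1] ⬝ᵥ (pmLayer w₁ w₂ c).eval G χ v = w₁ ⬝ᵥ χ v + w₂ ⬝ᵥ ∑ u ∈ G.neighbors v, χ u + c := by
  set z := w₁ ⬝ᵥ χ v + w₂ ⬝ᵥ ∑ u ∈ G.neighbors v, χ u + c
  have h₀ : (pmLayer w₁ w₂ c).eval G χ v 0 = ReLU z := by simp [z, pmLayer, Layer.eval, mulVec]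
  have h₁ : (pmLayer w₁ w₂ c).eval G χ v 1 = ReLU (-z) := by
    simp [z, pmLayer, Layer.eval, mulVec, dotProduct, Finset.sum_neg_distrib]
    ring_nf
  rw [dotProduct, Fin.sum_univ_two, h₀, h₁]
  simpa [sub_eq_add_neg] using relu_sub_relu_neg z

noncomputable def reluLayer (w : Fin m → ℝ) {k : ℕ} (t : Fin k → ℝ) : Layer m k :=
  ⟨.of fun _ => w, 0, -t, ReLU, continuous_relu⟩

lemma eval_reluLayer (w : Fin m → ℝ) {k : ℕ} (t : Fin k → ℝ) (G : FinGraph)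
    (χ : Fin G.n → Fin m → ℝ) (v : Fin G.n) (i : Fin k) :
    (reluLayer w t).eval G χ v i = ReLU (w ⬝ᵥ χ v - t i) := by
  simp [reluLayer, Layer.eval, mulVec, sub_eq_add_neg]

def readoutLayer (w : Fin m → ℝ) : Layer m 1 := ⟨.of ![w], 0, 0, id, continuous_id⟩

lemma eval_readoutLayer (w : Fin m → ℝ) (G : FinGraph) (χ : Fin G.n → Fin m → ℝ) (v : Fin G.n) :
    (readoutLayer w).eval G χ v 0 = w ⬝ᵥ χ v := by
  simp [readoutLayer, Layer.eval, mulVec]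

lemma append_dotProduct_append {m₁ m₂ : ℕ} (w₁ x₁ : Fin m₁ → ℝ) (w₂ x₂ : Fin m₂ → ℝ) :
    Fin.append w₁ w₂ ⬝ᵥ Fin.append x₁ x₂ = w₁ ⬝ᵥ x₁ + w₂ ⬝ᵥ x₂ := by
  simp [dotProduct, Fin.sum_univ_add]

end Approximation

open Matrix in
def ReLUApprox {d : ℕ} (p : ℕ) (X : Set (Fin d → ℝ))
    (φ : (G : FinGraph) → (Fin G.n → Fin d → ℝ) → Fin G.n → ℝ) (δ : ℝ) : Prop :=
  ∃ (m : ℕ) (N : MPNN d m) (w : Fin m → ℝ), N.activations ⊆ {ReLU} ∧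
    ∀ G : FinGraph, G.DegreeLE p → ∀ χ : Fin G.n → Fin d → ℝ, (∀ v, χ v ∈ X) →
      ∀ v, |φ G χ v - w ⬝ᵥ N.eval G χ v| ≤ δ

namespace ReLUApprox

open Matrix

variable {p d : ℕ} {X : Set (Fin d → ℝ)}
variable {φ ψ : (G : FinGraph) → (Fin G.n → Fin d → ℝ) → Fin G.n → ℝ} {δ δ' : ℝ}

lemma mono (h : ReLUApprox p X φ δ) (hδ : δ ≤ δ') : ReLUApprox p X φ δ' :=
  let ⟨m, N, w, hN, happrox⟩ := h
  ⟨m, N, w, hN, fun G hG χ hχ v => (happrox G hG χ hχ v).trans hδ⟩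

lemma affine (w₁ w₂ : Fin d → ℝ) (c : ℝ) :
    ReLUApprox p X (fun G χ v => w₁ ⬝ᵥ χ v + w₂ ⬝ᵥ ∑ u ∈ G.neighbors v, χ u + c) 0 :=
  ⟨2, .single (pmLayer w₁ w₂ c), ![1, -1], by simp [MPNN.activations, pmLayer],
    fun G _ χ _ v => by
      rw [MPNN.eval, dotProduct_eval_pmLayer, sub_self, abs_zero]⟩

lemma const_mul (h : ReLUApprox p X φ δ) (a : ℝ) :
    ReLUApprox p X (fun G χ v => a * φ G χ v) (|a| * δ) :=
  let ⟨m, N, w, hN, happrox⟩ := h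
  ⟨m, N, a • w, hN, fun G hG χ hχ v => by
    rw [smul_dotProduct, smul_eq_mul, ← mul_sub, abs_mul]
    exact mul_le_mul_of_nonneg_left (happrox G hG χ hχ v) (abs_nonneg a)⟩

lemma add (h : ReLUApprox p X φ δ) (h' : ReLUApprox p X ψ δ') :
    ReLUApprox p X (fun G χ v => φ G χ v + ψ G χ v) (δ + δ') := by
  obtain ⟨m, N, w, hN, happrox⟩ := h
  obtain ⟨m', N', w', hN', happrox'⟩ := h'
  obtain ⟨M, hM, heval⟩ := MPNN.exists_parallel hN hN'
  refine ⟨m + m', M, Fin.append w w', hM, fun G hG χ hχ v => ?_⟩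
  rw [heval, append_dotProduct_append, add_sub_add_comm]
  exact (abs_add_le _ _).trans (add_le_add (happrox G hG χ hχ v) (happrox' G hG χ hχ v))

lemma sum_neighbors (h : ReLUApprox p X φ δ) (hδ : 0 ≤ δ) :
    ReLUApprox p X (fun G χ v => ∑ u ∈ G.neighbors v, φ G χ u) (p * δ) := by
  obtain ⟨m, N, w, hN, happrox⟩ := h
  refine ⟨2, N.snoc (pmLayer 0 w 0), ![1, -1], MPNN.activations_snoc_subset hN rfl,
    fun G hG χ hχ v => ?_⟩
  rw [MPNN.eval_snoc, dotProduct_eval_pmLayer, zero_dotProduct, zero_add, add_zero,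
    dotProduct_sum, ← Finset.sum_sub_distrib]
  calc |∑ u ∈ G.neighbors v, (φ G χ u - w ⬝ᵥ N.eval G χ u)|
      ≤ ∑ u ∈ G.neighbors v, |φ G χ u - w ⬝ᵥ N.eval G χ u| := Finset.abs_sum_le_sum_abs _ _
    _ ≤ G.degree v * δ := by
      simpa [FinGraph.degree] using Finset.sum_le_card_nsmul _ _ _ fun u _ => happrox G hG χ hχ u
    _ ≤ p * δ := by gcongr; exact_mod_cast hG v

lemma comp {f : ℝ → ℝ} (hf : Continuous f) {B : ℝ}
    (hφ : ∀ G : FinGraph, G.DegreeLE p → ∀ χ : Fin G.n → Fin d → ℝ, (∀ v, χ v ∈ X) →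
      ∀ v, |φ G χ v| ≤ B) {ε : ℝ} (hε : 0 < ε) :
    ∃ δ > 0, ReLUApprox p X φ δ → ReLUApprox p X (fun G χ v => f (φ G χ v)) ε := by
  obtain ⟨θ, hθ, hfθ⟩ := Metric.uniformContinuousOn_iff_le.mp
    ((isCompact_Icc (a := -(B + 1)) (b := B + 1)).uniformContinuousOn_of_continuous
      hf.continuousOn) (ε / 2) (by positivity)
  obtain ⟨g, ⟨k, c, t, hg⟩, hfg⟩ := hf.continuousOn.exists_isReLUSum_approx
    (a := -(B + 1)) (b := B + 1) (half_pos hε)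
  refine ⟨min 1 θ, lt_min one_pos hθ, fun ⟨m, N, w, hN, happrox⟩ => ?_⟩
  refine ⟨k, N.snoc (reluLayer w t), c, MPNN.activations_snoc_subset hN rfl,
    fun G hG χ hχ v => ?_⟩
  set y := φ G χ v
  set z := w ⬝ᵥ N.eval G χ v
  have hyz : |y - z| ≤ min 1 θ := happrox G hG χ hχ v
  have hy : |y| ≤ B := hφ G hG χ hχ v
  have hyI : y ∈ Set.Icc (-(B + 1)) (B + 1) := by
    constructor <;> linarith [abs_le.mp hy]
  have hzI : z ∈ Set.Icc (-(B + 1)) (B + 1) := by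
    have := abs_le.mp (hyz.trans (min_le_left _ _))
    constructor <;> linarith [abs_le.mp hy]
  have hreadout : c ⬝ᵥ (N.snoc (reluLayer w t)).eval G χ v = g z := by
    simp [MPNN.eval_snoc, eval_reluLayer, dotProduct, hg, z]
  rw [hreadout]
  calc |f y - g z| ≤ |f y - f z| + |f z - g z| := abs_sub_le _ _ _
    _ ≤ ε / 2 + ε / 2 := by
      gcongr
      · rw [← Real.dist_eq]
        exact hfθ y hyI z hzI (by rw [Real.dist_eq]; exact hyz.trans (min_le_right _ _))
      · exact hfg z hzI
    _ = ε := add_halves ε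

end ReLUApprox

namespace MPLang

variable {p d : ℕ} {X : Set (Fin d → ℝ)}

lemma exists_bound (hX : IsCompact X) (e : MPLang) :
    ∃ B : ℝ, ∀ G : FinGraph, G.DegreeLE p → ∀ χ : Fin G.n → Fin d → ℝ, (∀ v, χ v ∈ X) →
      ∀ v, |e.eval d G χ v| ≤ B := by
  induction e with
  | one => exact ⟨1, fun G _ χ _ v => by simp [eval]⟩
  | proj i =>
    obtain ⟨C, hC, hXC⟩ := hX.isBounded.exists_pos_norm_le
    refine ⟨C, fun G _ χ hχ v => ?_⟩
    simp only [eval]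
    split
    · exact (norm_le_pi_norm (χ v) _).trans (hXC _ (hχ v))
    · simpa using hC.le
  | scale a e ih =>
    obtain ⟨B, hB⟩ := ih
    exact ⟨|a| * B, fun G hG χ hχ v => by
      rw [eval, abs_mul]; exact mul_le_mul_of_nonneg_left (hB G hG χ hχ v) (abs_nonneg a)⟩
  | add e₁ e₂ ih₁ ih₂ =>
    obtain ⟨B₁, hB₁⟩ := ih₁
    obtain ⟨B₂, hB₂⟩ := ih₂
    exact ⟨B₁ + B₂, fun G hG χ hχ v =>
      (abs_add_le _ _).trans (add_le_add (hB₁ G hG χ hχ v) (hB₂ G hG χ hχ v))⟩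
  | app f hf e ih =>
    obtain ⟨B, hB⟩ := ih
    obtain ⟨C, hC⟩ := (isCompact_Icc (a := -B) (b := B)).exists_bound_of_continuousOn
      hf.continuousOn
    exact ⟨C, fun G hG χ hχ v => hC _ (abs_le.mp (hB G hG χ hχ v))⟩
  | diamond e ih =>
    obtain ⟨B, hB⟩ := ih
    refine ⟨p * |B|, fun G hG χ hχ v => ?_⟩
    calc |∑ u ∈ G.neighbors v, e.eval d G χ u|
        ≤ ∑ u ∈ G.neighbors v, |e.eval d G χ u| := Finset.abs_sum_le_sum_abs _ _
      _ ≤ G.degree v * |B| := by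
        simpa [FinGraph.degree] using Finset.sum_le_card_nsmul _ _ _
          fun u _ => (hB G hG χ hχ u).trans (le_abs_self B)
      _ ≤ p * |B| := by gcongr; exact_mod_cast hG v

theorem reluApprox_eval (hX : IsCompact X) {e : MPLang} (he : e.Appropriate d) {δ : ℝ}
    (hδ : 0 < δ) : ReLUApprox p X (e.eval d) δ := by
  induction e generalizing δ with
  | one =>
    have h := (ReLUApprox.affine (p := p) (X := X) 0 0 1).mono hδ.le
    simp only [zero_dotProduct, zero_add] at h
    exact h
  | proj i =>
    have hi : i - 1 < d := by have : 1 ≤ i ∧ i ≤ d := he; omega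
    have := (ReLUApprox.affine (p := p) (X := X) (Pi.single ⟨i - 1, hi⟩ 1) 0 0).mono hδ.le
    simpa [eval, hi] using this
  | scale a e ih =>
    refine (ReLUApprox.const_mul (ih he (δ := δ / (|a| + 1)) (by positivity)) a).mono ?_
    rw [mul_div_assoc', div_le_iff₀ (by positivity)]
    nlinarith
  | add e₁ e₂ ih₁ ih₂ =>
    exact ((ih₁ he.1 (half_pos hδ)).add (ih₂ he.2 (half_pos hδ))).mono (add_halves δ).le
  | app f hf e ih =>
    obtain ⟨B, hB⟩ := exists_bound (p := p) hX e
    obtain ⟨δ₀, hδ₀, hcomp⟩ := ReLUApprox.comp hf hB hδ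
    exact hcomp (ih he hδ₀)
  | diamond e ih =>
    refine ((ih he (δ := δ / (p + 1)) (by positivity)).sum_neighbors (by positivity)).mono ?_
    rw [mul_div_assoc', div_le_iff₀ (by positivity)]
    nlinarith

end MPLang

/-- over graphs of degree at most `p` and feature maps with
values in a compact set `X`, every MPLang expression can be uniformly
approximated by a ReLU-MPNN. -/
theorem mplang_approx_by_relu_mpnn (p d : ℕ) (X : Set (Fin d → ℝ))
    (hX : IsCompact X) (e : MPLang) (he : e.Appropriate d)
    (ε : ℝ) (hε : 0 < ε) :
    ∃ N : MPNN d 1, N.IsReLU ∧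
      ∀ (G : FinGraph), G.DegreeLE p →
        ∀ χ : Fin G.n → Fin d → ℝ, (∀ v, χ v ∈ X) →
          ∀ v : Fin G.n, |e.eval d G χ v - N.eval G χ v 0| ≤ ε := by
  obtain ⟨m, N, w, hN, happrox⟩ := MPLang.reluApprox_eval (p := p) hX he hε
  refine ⟨N.snoc (readoutLayer w), MPNN.isReLU_snoc hN (Or.inr rfl), fun G hG χ hχ v => ?_⟩
  rw [MPNN.eval_snoc, eval_readoutLayer]
  exact happrox G hG χ hχ v
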